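/- Let H be a Hopf algebra over a field k and let A and L be normal Hopf subalgebras of H such that the multiplication map m : A ⊗ L → H, a ⊗ l ↦ al, is a linear isomorphism. Then m is an isomorphism of Hopf algebras, where A ⊗ L carries the tensor product Hopf algebra structure (componentwise multiplication, tensor product coalgebra structure, and antipode S_A ⊗ S_L). -/

import Mathlib

open scoped TensorProduct

/-- The linear map `h ↦ h₁ a S(h₂)` (Sweedler notation), used to express normality
of a Hopf subalgebra. -/
noncomputable def adjL (k : Type*) {H : Type*} [CommRing k] [Ring H] [HopfAlgebra k H]
    (a : H) : H →ₗ[k] H :=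
  (TensorProduct.lift (((LinearMap.mul k H).comp (LinearMap.mulRight k a)).compl₂
    (HopfAlgebra.antipode (R := k)))) ∘ₗ Coalgebra.comul

/-- The linear map `h ↦ S(h₁) a h₂` (Sweedler notation). -/
noncomputable def adjR (k : Type*) {H : Type*} [CommRing k] [Ring H] [HopfAlgebra k H]
    (a : H) : H →ₗ[k] H :=
  (TensorProduct.lift ((LinearMap.mul k H).comp
    ((LinearMap.mulRight k a).comp (HopfAlgebra.antipode (R := k))))) ∘ₗ Coalgebra.comul

/-- A subalgebra `A` of a Hopf algebra `H` is a Hopf subalgebra if the comultiplication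
maps `A` into `A ⊗ A` (viewed inside `H ⊗ H`) and the antipode maps `A` into `A`. -/
def IsHopfSubalgebra (k : Type*) {H : Type*} [CommRing k] [Ring H] [HopfAlgebra k H]
    (A : Subalgebra k H) : Prop :=
  (∀ a ∈ A, Coalgebra.comul (R := k) a ∈
    LinearMap.range (TensorProduct.mapIncl (Subalgebra.toSubmodule A)
      (Subalgebra.toSubmodule A))) ∧
  ∀ a ∈ A, HopfAlgebra.antipode (R := k) a ∈ A

/-- A Hopf subalgebra `A` of `H` is normal if `h₁ a S(h₂) ∈ A` and `S(h₁) a h₂ ∈ A`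
for all `h ∈ H` and `a ∈ A`. -/
def IsNormalHopfSubalgebra (k : Type*) {H : Type*} [CommRing k] [Ring H] [HopfAlgebra k H]
    (A : Subalgebra k H) : Prop :=
  IsHopfSubalgebra k A ∧ ∀ a ∈ A, ∀ h : H, adjL k a h ∈ A ∧ adjR k a h ∈ A

universe u

/-! For `x ∈ A` and `u ∈ L`, the Hopf commutator `[x, u] = x₁ u₁ S(x₂) S(u₂)` can be written
both as `∑ x₁ (u₁ S(x₂) S(u₂))` and as `∑ (x₁ u₁ S(x₂)) S(u₂)`, so normality of `A` puts it in `A`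
and normality of `L` puts it in `L`. Injectivity of the multiplication map forces `A ∩ L = k`,
hence `[x, u] = ε(x) ε(u)`. In the convolution algebra of linear maps `H ⊗ H → H` one has
`[-, -] * (x ⊗ u ↦ u x) = (x ⊗ u ↦ x u)`, i.e. `a l = ∑ [a₁, l₁] l₂ a₂`, and therefore `a l = l a`.
So `a ⊗ l ↦ a l` is an algebra map; it is always a coalgebra map, and a bijective bialgebra map
is a bialgebra isomorphism. -/

open Coalgebra HopfAlgebra TensorProduct WithConv

namespace Bialgebra
variable {k H : Type*} [CommSemiring k] [Semiring H] [Bialgebra k H]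

variable (k H) in
noncomputable def mulRev : H ⊗[k] H →ₗc[k] H :=
  (mulCoalgHom k H).comp (TensorProduct.comm k H H : H ⊗[k] H →ₗc[k] H ⊗[k] H)

@[simp] lemma mulRev_tmul (x u : H) : mulRev k H (x ⊗ₜ u) = u * x := rfl

end Bialgebra

namespace HopfAlgebra
variable {k H C : Type*} [CommSemiring k] [Semiring H] [HopfAlgebra k H]
  [AddCommMonoid C] [Module k C] [Coalgebra k C]

lemma antipode_comp_mul_self (f : C →ₗc[k] H) :
    toConv (antipode k ∘ₗ f.toLinearMap) * toConv f.toLinearMap = 1 := by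
  have := LinearMap.convMul_comp_coalgHom_distrib (toConv (antipode k (A := H))) (toConv .id) f
  rw [LinearMap.antipode_mul_id] at this
  refine WithConv.ofConv_injective (this.symm.trans ?_)
  ext c
  simp

variable (k H) in
noncomputable def hopfCommutator : WithConv (H ⊗[k] H →ₗ[k] H) :=
  toConv (LinearMap.mul' k H) * toConv (antipode k ∘ₗ (Bialgebra.mulRev k H).toLinearMap)

lemma hopfCommutator_tmul {ι κ : Type*} {x u : H} (rx : Repr k x ι) (ru : Repr k u κ) :
    hopfCommutator k H (x ⊗ₜ u) = ∑ i ∈ rx.index, ∑ j ∈ ru.index,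
      rx.left i * ru.left j * antipode k (rx.right i) * antipode k (ru.right j) := by
  rw [hopfCommutator, (rx.tmul ru).convMul_apply, Repr.tmul_index, Finset.sum_product]
  simp [antipode_mul_antidistrib, mul_assoc]

lemma counit_comp_hopfCommutator :
    counit ∘ₗ (hopfCommutator k H).ofConv = counit (R := k) (A := H ⊗[k] H) := by
  have hmul : counit ∘ₗ LinearMap.mul' k H = counit (R := k) (A := H ⊗[k] H) :=
    CoalgHomClass.counit_comp (Bialgebra.mulCoalgHom k H)
  have hrev : counit ∘ₗ antipode k ∘ₗ (Bialgebra.mulRev k H).toLinearMap =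
      counit (R := k) (A := H ⊗[k] H) := by
    rw [← LinearMap.comp_assoc, counit_comp_antipode]
    exact (Bialgebra.mulRev k H).counit_comp
  have hone : toConv (counit (R := k) (A := H ⊗[k] H)) = 1 := by
    rw [LinearMap.convOne_def, Algebra.linearMap_self, LinearMap.id_comp]
  have h := LinearMap.algHom_comp_convMul_distrib (Bialgebra.counitAlgHom k H)
    (toConv (LinearMap.mul' k H)) (toConv (antipode k ∘ₗ (Bialgebra.mulRev k H).toLinearMap))
  simp only [Bialgebra.toLinearMap_counitAlgHom, hmul, hrev, hone, one_mul] at h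
  exact h

lemma hopfCommutator_mul_mulRev :
    hopfCommutator k H * toConv (Bialgebra.mulRev k H).toLinearMap =
      toConv (LinearMap.mul' k H) := by
  rw [hopfCommutator, mul_assoc, antipode_comp_mul_self, mul_one]

lemma mul_comp_eq_mulRev_comp (f : C →ₗc[k] H ⊗[k] H)
    (hf : (hopfCommutator k H).ofConv ∘ₗ f.toLinearMap = Algebra.linearMap k H ∘ₗ counit) :
    LinearMap.mul' k H ∘ₗ f.toLinearMap = (Bialgebra.mulRev k H).toLinearMap ∘ₗ f.toLinearMap := by
  have := LinearMap.convMul_comp_coalgHom_distrib (hopfCommutator k H)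
    (toConv (Bialgebra.mulRev k H).toLinearMap) f
  rwa [hopfCommutator_mul_mulRev, hf, ← LinearMap.convOne_def, one_mul] at this

end HopfAlgebra

section Normal
variable {k H : Type*} [CommRing k] [Ring H] [HopfAlgebra k H] {A L : Subalgebra k H}

lemma adjL_eq_sum {ι : Type*} (a : H) {h : H} (r : Repr k h ι) :
    adjL k a h = ∑ i ∈ r.index, r.left i * a * antipode k (r.right i) := by
  simp [adjL, ← r.eq]

lemma IsHopfSubalgebra.exists_repr (hA : IsHopfSubalgebra k A) {x : H} (hx : x ∈ A) :
    ∃ r : Repr k x (A × A), ∀ i, r.left i ∈ A ∧ r.right i ∈ A := by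
  obtain ⟨z, hz⟩ := hA.1 x hx
  obtain ⟨s, rfl⟩ := TensorProduct.exists_finset (R := k) z
  refine ⟨⟨s, fun p => p.1, fun p => p.2, ?_⟩, fun p => ⟨p.1.2, p.2.2⟩⟩
  rw [← hz, map_sum]
  rfl

lemma IsNormalHopfSubalgebra.hopfCommutator_tmul_mem_left (hA : IsNormalHopfSubalgebra k A)
    {x : H} (hx : x ∈ A) (u : H) : hopfCommutator k H (x ⊗ₜ u) ∈ A := by
  obtain ⟨rx, hrx⟩ := hA.1.exists_repr hx
  rw [hopfCommutator_tmul rx (ℛ k u)]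
  refine Subalgebra.sum_mem _ fun i _ => ?_
  have hsum : ∑ j ∈ (ℛ k u).index, rx.left i * (ℛ k u).left j * antipode k (rx.right i) *
      antipode k ((ℛ k u).right j) = rx.left i * adjL k (antipode k (rx.right i)) u := by
    simp [adjL_eq_sum _ (ℛ k u), Finset.mul_sum, mul_assoc]
  rw [hsum]
  exact mul_mem (hrx i).1 (hA.2 _ (hA.1.2 _ (hrx i).2) u).1

lemma IsNormalHopfSubalgebra.hopfCommutator_tmul_mem_right (hL : IsNormalHopfSubalgebra k L)
    (x : H) {u : H} (hu : u ∈ L) : hopfCommutator k H (x ⊗ₜ u) ∈ L := by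
  obtain ⟨ru, hru⟩ := hL.1.exists_repr hu
  rw [hopfCommutator_tmul (ℛ k x) ru, Finset.sum_comm]
  refine Subalgebra.sum_mem _ fun j _ => ?_
  have hsum : ∑ i ∈ (ℛ k x).index, (ℛ k x).left i * ru.left j * antipode k ((ℛ k x).right i) *
      antipode k (ru.right j) = adjL k (ru.left j) x * antipode k (ru.right j) := by
    simp [adjL_eq_sum _ (ℛ k x), Finset.sum_mul]
  rw [hsum]
  exact mul_mem (hL.2 _ (hru j).1 x).1 (hL.1.2 _ (hru j).2)

lemma hopfCommutator_tmul_eq_algebraMap (hA : IsNormalHopfSubalgebra k A)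
    (hL : IsNormalHopfSubalgebra k L) (hAL : A ⊓ L = ⊥) {x u : H} (hx : x ∈ A) (hu : u ∈ L) :
    hopfCommutator k H (x ⊗ₜ u) = algebraMap k H (counit (R := k) x * counit (R := k) u) := by
  have hmem : hopfCommutator k H (x ⊗ₜ u) ∈ A ⊓ L :=
    ⟨hA.hopfCommutator_tmul_mem_left hx u, hL.hopfCommutator_tmul_mem_right x hu⟩
  obtain ⟨r, hr⟩ := Algebra.mem_bot.1 (hAL ▸ hmem)
  have hr' := congr(counit (R := k) $hr)
  rw [Bialgebra.counit_algebraMap, ← LinearMap.comp_apply, counit_comp_hopfCommutator] at hr'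
  rw [← hr, hr', TensorProduct.counit_tmul, smul_eq_mul, mul_comm]

end Normal

namespace Bialgebra.TensorProduct
variable {R A B C : Type*} [CommSemiring R] [Semiring A] [Semiring B] [Semiring C]
  [Bialgebra R A] [Bialgebra R B] [Bialgebra R C]

lemma mulCoalgHom_comp_map_apply (f : A →ₐc[R] C) (g : B →ₐc[R] C)
    (hfg : ∀ a b, Commute (f a) (g b)) (x : A ⊗[R] B) :
    (mulCoalgHom R C).comp (map f g : A ⊗[R] B →ₗc[R] C ⊗[R] C) x =
      Algebra.TensorProduct.lift (f : A →ₐ[R] C) (g : B →ₐ[R] C) hfg x := by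
  induction x using TensorProduct.induction_on with
  | zero => simp
  | tmul a b => exact (Algebra.TensorProduct.lift_tmul (f : A →ₐ[R] C) (g : B →ₐ[R] C) hfg a b).symm
  | add x y hx hy => simp only [map_add, hx, hy]

noncomputable def lift (f : A →ₐc[R] C) (g : B →ₐc[R] C) (hfg : ∀ a b, Commute (f a) (g b)) :
    A ⊗[R] B →ₐc[R] C where
  __ := (mulCoalgHom R C).comp (map f g : A ⊗[R] B →ₗc[R] C ⊗[R] C)
  map_one' := (mulCoalgHom_comp_map_apply f g hfg 1).trans (map_one _)
  map_mul' x y := by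
    have h := mulCoalgHom_comp_map_apply f g hfg
    exact (h _).trans ((map_mul _ x y).trans (by rw [← h, ← h]; rfl))

end Bialgebra.TensorProduct

lemma AlgHom.range_inf_range_eq_bot_of_injective {R A B C : Type*} [CommSemiring R] [Semiring A]
    [Semiring B] [Semiring C] [Algebra R A] [Bialgebra R B] [Algebra R C]
    (f : A →ₐ[R] C) (g : B →ₐ[R] C)
    (h : Function.Injective
      (TensorProduct.lift (((LinearMap.mul R C).comp f.toLinearMap).compl₂ g.toLinearMap))) :
    f.range ⊓ g.range = ⊥ := by
  refine eq_bot_iff.2 ?_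
  rintro _ ⟨⟨a, rfl⟩, b, hb⟩
  replace hb : g b = f a := hb
  have htmul : a ⊗ₜ[R] (1 : B) = 1 ⊗ₜ b := h (by simp [hb])
  have ha : a = counit (R := R) b • 1 := by
    simpa using congr(TensorProduct.rid R A (counit.lTensor A $htmul))
  exact ⟨counit (R := R) b, by simp [ha, Algebra.algebraMap_eq_smul_one]⟩

theorem commute_of_isNormalHopfSubalgebra {k A L H : Type*} [CommRing k] [Semiring A]
    [Semiring L] [Ring H] [Bialgebra k A] [Bialgebra k L] [HopfAlgebra k H]
    (ιA : A →ₐc[k] H) (ιL : L →ₐc[k] H)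
    (hA : IsNormalHopfSubalgebra k (ιA : A →ₐ[k] H).range)
    (hL : IsNormalHopfSubalgebra k (ιL : L →ₐ[k] H).range)
    (hAL : (ιA : A →ₐ[k] H).range ⊓ (ιL : L →ₐ[k] H).range = ⊥) (a : A) (l : L) :
    Commute (ιA a) (ιL l) := by
  let j : A ⊗[k] L →ₗc[k] H ⊗[k] H := Bialgebra.TensorProduct.map ιA ιL
  have hj : (hopfCommutator k H).ofConv ∘ₗ j.toLinearMap = Algebra.linearMap k H ∘ₗ counit := by
    ext a l
    have := hopfCommutator_tmul_eq_algebraMap hA hL hAL (x := ιA a) (u := ιL l) ⟨a, rfl⟩ ⟨l, rfl⟩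
    simp [j, this, mul_comm]
  exact congr($(mul_comp_eq_mulRev_comp j hj) (a ⊗ₜ l))

theorem stmt2_general {k A L H : Type u} [Field k] [Ring A] [Ring L] [Ring H]
    [HopfAlgebra k A] [HopfAlgebra k L] [HopfAlgebra k H]
    (ιA : A →ₐc[k] H) (ιL : L →ₐc[k] H)
    (hA : IsNormalHopfSubalgebra k (ιA : A →ₐ[k] H).range)
    (hL : IsNormalHopfSubalgebra k (ιL : L →ₐ[k] H).range)
    (hm : Function.Bijective (TensorProduct.lift
      (((LinearMap.mul k H).comp (ιA : A →ₐ[k] H).toLinearMap).compl₂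
        (ιL : L →ₐ[k] H).toLinearMap))) :
    ∃ e : (A ⊗[k] L) ≃ₐc[k] H, ∀ (a : A) (l : L), e (a ⊗ₜ[k] l) = ιA a * ιL l := by
  have hcomm := commute_of_isNormalHopfSubalgebra ιA ιL hA hL
    (AlgHom.range_inf_range_eq_bot_of_injective _ _ hm.injective)
  let φ := Bialgebra.TensorProduct.lift ιA ιL hcomm
  have hlin : (φ : A ⊗[k] L →ₗ[k] H) = TensorProduct.lift
      (((LinearMap.mul k H).comp (ιA : A →ₐ[k] H).toLinearMap).compl₂
        (ιL : L →ₐ[k] H).toLinearMap) :=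
    TensorProduct.ext' fun _ _ => rfl
  rw [← hlin] at hm
  exact ⟨BialgEquiv.ofBijective φ hm, fun _ _ => rfl⟩

/-- Factorization of a Hopf algebra with both factors normal: if `A` and `L` are
Hopf subalgebras of `H` (presented as injective bialgebra embeddings of Hopf algebras),
both normal in `H`, and the multiplication map `A ⊗ L → H`, `a ⊗ l ↦ al`, is bijective,
then it is an isomorphism of Hopf algebras, where `A ⊗ L` carries the tensor product
Hopf algebra structure. -/
theorem stmt2 {k A L H : Type u} [Field k] [Ring A] [Ring L] [Ring H]
    [HopfAlgebra k A] [HopfAlgebra k L] [HopfAlgebra k H]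
    (ιA : A →ₐc[k] H) (ιL : L →ₐc[k] H)
    (hιA : Function.Injective ιA) (hιL : Function.Injective ιL)
    (hA : IsNormalHopfSubalgebra k (ιA : A →ₐ[k] H).range)
    (hL : IsNormalHopfSubalgebra k (ιL : L →ₐ[k] H).range)
    (hm : Function.Bijective (TensorProduct.lift
      (((LinearMap.mul k H).comp (ιA : A →ₐ[k] H).toLinearMap).compl₂
        (ιL : L →ₐ[k] H).toLinearMap))) :
    ∃ e : (A ⊗[k] L) ≃ₐc[k] H, ∀ (a : A) (l : L), e (a ⊗ₜ[k] l) = ιA a * ιL l :=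
  stmt2_general ιA ιL hA hL hm
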